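/- arXiv:1301.5683 — 7 statements merged into one kernel-verified Lean document; each statement's English description precedes it below -/
import Mathlib

section
/- Let X be a set and Δ : X × X → ℝ with Δ(x,y) = f(x) − f(y) for some f : X → ℝ. Suppose a sequence of pairs (x_t, y_t), t = 0,1,2,..., satisfies: for all t ≥ 0, either y_{t+1} = x_t, or (y_{t+1} = y_t and Δ(x_t, y_t) ≤ 0). Then for every T ≥ 0, the partial sum ∑_{t=0}^T Δ(x_t, y_t) ≤ f(x_T) − f(y_0) = Δ(x_T, y_0). -/
/-! Each round the imitator's potential gains at least the opponent's current advantage: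
copying gains `f x_t - f y_t` exactly, staying gains `0 ≥ f x_t - f y_t`. Summing these gains
telescopes to `f y_T - f y_0`, and the last term `f x_T - f y_T` closes the bound. -/

lemma sum_range_succ_sub_le_of_le_succ_sub {u v : ℕ → ℝ}
    (hstep : ∀ t, u t - v t ≤ v (t + 1) - v t) (T : ℕ) :
    ∑ t ∈ Finset.range (T + 1), (u t - v t) ≤ u T - v 0 := by
  have hgain : ∑ t ∈ Finset.range T, (u t - v t) ≤ v T - v 0 :=
    (Finset.sum_le_sum fun t _ => hstep t).trans_eq (Finset.sum_range_sub v T)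
  rw [Finset.sum_range_succ]
  linarith

/-- Telescoping bound: if `Δ(x,y) = f(x) - f(y)` and the imitator either copies
(`y_{t+1} = x_t`) or stays with `y_{t+1} = y_t` while `Δ(x_t, y_t) ≤ 0`, then the
cumulative relative payoff of the opponent is bounded by `f(x_T) - f(y_0)`. -/
theorem imitation_telescoping_bound {X : Type*} (f : X → ℝ)
    (Δ : X → X → ℝ) (hΔ : ∀ x y, Δ x y = f x - f y)
    (x y : ℕ → X)
    (hrule : ∀ t, y (t + 1) = x t ∨ (y (t + 1) = y t ∧ Δ (x t) (y t) ≤ 0)) :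
    ∀ T, ∑ t ∈ Finset.range (T + 1), Δ (x t) (y t) ≤ f (x T) - f (y 0) ∧
      f (x T) - f (y 0) = Δ (x T) (y 0) := by
  intro T
  refine ⟨?_, (hΔ _ _).symm⟩
  have hstep : ∀ t, f (x t) - f (y t) ≤ f (y (t + 1)) - f (y t) := by
    intro t
    rcases hrule t with hcopy | ⟨hstay, hnonpos⟩
    · rw [hcopy]
    · rw [hstay, sub_self, ← hΔ]
      exact hnonpos
  simpa only [hΔ] using sum_range_succ_sub_le_of_le_succ_sub hstep T
end

section
/- Let X be a nonempty compact topological space and π : X × X → ℝ continuous with relative payoff Δ(x,y) = π(x,y) − π(y,x). If Δ is additively separable (equivalently Δ(x,y) = f(x) − f(y) for a continuous f), then imitation is essentially unbeatable: for every sequence (x_t) of opponent actions and every initial imitator action y_0, with (y_t) generated by any imitation rule (y_{t+1} = x_t if Δ(x_t,y_t) > 0, otherwise y_{t+1} ∈ {x_t, y_t}), the total relative payoff ∑_{t=0}^T Δ(x_t,y_t) ≤ max_{x,y ∈ X} Δ(x,y) for all T ≥ 0. -/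
/-!
With `Δ x y = f x - f y`, a period contributes `Δ (x t) (y t) ≤ f (y (t+1)) - f (y t)`: either the
imitator copies (`y (t+1) = x t`, equality), or it stays put, which the rule only allows when
`Δ (x t) (y t) ≤ 0`. The cumulative relative payoff therefore telescopes to at most
`f (y (T+1)) - f (y 0) = Δ (y (T+1)) (y 0)`, a single value of `Δ`.
-/

open Finset

def IsImitationRule {α : Type*} (Δ : α → α → ℝ) (x y : ℕ → α) : Prop :=
  ∀ t, (0 < Δ (x t) (y t) → y (t + 1) = x t) ∧ (y (t + 1) = x t ∨ y (t + 1) = y t)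

namespace IsImitationRule

variable {α : Type*} {Δ : α → α → ℝ} {f : α → ℝ} {x y : ℕ → α}

theorem relPayoff_le_potential_increment (hrule : IsImitationRule Δ x y)
    (hsep : ∀ a b, Δ a b = f a - f b) (t : ℕ) :
    Δ (x t) (y t) ≤ f (y (t + 1)) - f (y t) := by
  by_cases hbeaten : 0 < Δ (x t) (y t)
  · rw [hsep, (hrule t).1 hbeaten]
  · rcases (hrule t).2 with hcopy | hstay
    · rw [hsep, hcopy]
    · rw [hstay, sub_self]
      exact not_lt.mp hbeaten

theorem sum_relPayoff_le (hrule : IsImitationRule Δ x y) (hsep : ∀ a b, Δ a b = f a - f b)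
    (n : ℕ) : ∑ t ∈ range n, Δ (x t) (y t) ≤ Δ (y n) (y 0) := by
  calc ∑ t ∈ range n, Δ (x t) (y t)
      ≤ ∑ t ∈ range n, (f (y (t + 1)) - f (y t)) :=
        sum_le_sum fun t _ => hrule.relPayoff_le_potential_increment hsep t
    _ = Δ (y n) (y 0) := (sum_range_sub (f ∘ y) n).trans (hsep _ _).symm

end IsImitationRule

theorem bddAbove_range_sub_of_continuous {X : Type*} [TopologicalSpace X] [CompactSpace X]
    {f : X → ℝ} (hf : Continuous f) : BddAbove (Set.range fun p : X × X => f p.1 - f p.2) :=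
  (isCompact_range ((hf.comp continuous_fst).sub (hf.comp continuous_snd))).bddAbove

theorem imitation_essentially_unbeatable_general {X : Type*} [TopologicalSpace X]
    [CompactSpace X]
    (Δ : X → X → ℝ)
    (f : X → ℝ) (hf : Continuous f) (hsep : ∀ x y, Δ x y = f x - f y)
    (x y : ℕ → X)
    (hrule : ∀ t, (0 < Δ (x t) (y t) → y (t + 1) = x t) ∧
      (y (t + 1) = x t ∨ y (t + 1) = y t)) :
    ∀ T, ∑ t ∈ Finset.range (T + 1), Δ (x t) (y t) ≤
      sSup (Set.range fun p : X × X => Δ p.1 p.2) := by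
  have hΔ_eq : (fun p : X × X => Δ p.1 p.2) = fun p => f p.1 - f p.2 :=
    funext fun p => hsep p.1 p.2
  intro T
  calc ∑ t ∈ range (T + 1), Δ (x t) (y t)
      ≤ Δ (y (T + 1)) (y 0) := IsImitationRule.sum_relPayoff_le hrule hsep (T + 1)
    _ ≤ sSup (Set.range fun p : X × X => Δ p.1 p.2) := by
        refine le_csSup ?_ ⟨(y (T + 1), y 0), rfl⟩
        rw [hΔ_eq]
        exact bddAbove_range_sub_of_continuous hf

/-- If the relative payoff function of a symmetric two-player game on a nonempty
compact space with continuous payoffs is additively separable,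
`Δ(x,y) = f(x) - f(y)` with `f` continuous, then any imitation rule is
essentially unbeatable: the cumulative relative payoff of the opponent never
exceeds the maximal one-period payoff differential. -/
theorem imitation_essentially_unbeatable {X : Type*} [TopologicalSpace X]
    [CompactSpace X] [Nonempty X]
    (π : X → X → ℝ) (hπ : Continuous fun p : X × X => π p.1 p.2)
    (Δ : X → X → ℝ) (hΔ : ∀ x y, Δ x y = π x y - π y x)
    (f : X → ℝ) (hf : Continuous f) (hsep : ∀ x y, Δ x y = f x - f y)
    (x y : ℕ → X)
    (hrule : ∀ t, (0 < Δ (x t) (y t) → y (t + 1) = x t) ∧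
      (y (t + 1) = x t ∨ y (t + 1) = y t)) :
    ∀ T, ∑ t ∈ Finset.range (T + 1), Δ (x t) (y t) ≤
      sSup (Set.range fun p : X × X => Δ p.1 p.2) :=
  imitation_essentially_unbeatable_general Δ f hf hsep x y hrule
end

section
/- Suppose tit-for-tat is essentially unbeatable in the symmetric two-player game (X, π), i.e., for any finite cycle of opponent actions played against tit-for-tat the total relative payoff is bounded. Then for every 3-cycle of actions x_0, x_1, x_2 ∈ X, the relative payoffs satisfy Δ(x_0,x_2) + Δ(x_1,x_0) + Δ(x_2,x_1) = 0, where Δ(x,y) = π(x,y) − π(y,x). -/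
/-! Against a periodic play the opponent's cumulative relative payoff grows linearly in the number
of completed periods, so boundedness forces the payoff over one period to be `≤ 0`. Applied to the
3-cycle and to its reverse, whose payoff is the negative by antisymmetry of `Δ`, this gives `= 0`. -/

open Finset Function

theorem nonpos_of_forall_nsmul_le {G : Type*} [AddCommGroup G] [LinearOrder G]
    [IsOrderedAddMonoid G] [Archimedean G] {a B : G} (h : ∀ n : ℕ, n • a ≤ B) : a ≤ 0 := by
  by_contra! ha
  obtain ⟨n, hn⟩ := Archimedean.arch (B + a) ha
  have : B + a ≤ B + 0 := by simpa using hn.trans (h n)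
  exact ha.not_ge (le_of_add_le_add_left this)

theorem Function.Periodic.sum_range_mul {M : Type*} [AddCommMonoid M] {f : ℕ → M} {n : ℕ}
    (hf : Periodic f n) (k : ℕ) : ∑ t ∈ range (k * n), f t = k • ∑ t ∈ range n, f t := by
  induction k with
  | zero => simp
  | succ k ih =>
    rw [add_one_mul, sum_range_add, ih, succ_nsmul]
    congr 1
    exact sum_congr rfl fun t _ => by rw [add_comm]; exact hf.nat_mul k t

theorem Function.Periodic.sum_range_nonpos {G : Type*} [AddCommGroup G] [LinearOrder G]
    [IsOrderedAddMonoid G] [Archimedean G] {f : ℕ → G} {n : ℕ} (hf : Periodic f n)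
    (hbdd : ∃ B, ∀ T, ∑ t ∈ range T, f t ≤ B) : ∑ t ∈ range n, f t ≤ 0 := by
  obtain ⟨B, hB⟩ := hbdd
  exact nonpos_of_forall_nsmul_le fun k => hf.sum_range_mul k ▸ hB (k * n)

theorem Function.Periodic.sum_range_lag_nonpos {X G : Type*} [AddCommGroup G] [LinearOrder G]
    [IsOrderedAddMonoid G] [Archimedean G] (Δ : X → X → G) {x : ℕ → X} {n : ℕ}
    (hx : Periodic x n) (hbdd : ∃ B, ∀ T, ∑ t ∈ range T, Δ (x (t + 1)) (x t) ≤ B) :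
    ∑ t ∈ range n, Δ (x (t + 1)) (x t) ≤ 0 :=
  Periodic.sum_range_nonpos (fun t => by simp only [add_right_comm t n, hx _]) hbdd

def threeCycle {X : Type*} (a b c : X) (t : ℕ) : X := ![a, b, c] (Fin.ofNat 3 t)

theorem threeCycle_periodic {X : Type*} (a b c : X) : Periodic (threeCycle a b c) 3 := by
  intro t
  simp only [threeCycle, Fin.ofNat, Nat.add_mod_right]

theorem threeCycle_sum_range_three {X M : Type*} [AddCommMonoid M] (f : X → X → M) (a b c : X) :
    ∑ t ∈ range 3, f (threeCycle a b c (t + 1)) (threeCycle a b c t) = f b a + f c b + f a c := by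
  simp [sum_range_succ, threeCycle, Fin.ofNat]

/-- Tit-for-tat answers the opponent's play `x` with `x t` at time `t + 1`, so `Δ (x (t + 1)) (x t)`
is the opponent's relative payoff in period `t + 1`. -/
def TitForTatEssentiallyUnbeatable {X : Type*} (Δ : X → X → ℝ) : Prop :=
  ∀ x : ℕ → X, (∃ n, 0 < n ∧ ∀ t, x (t + n) = x t) →
    ∃ B : ℝ, ∀ T, ∑ t ∈ range T, Δ (x (t + 1)) (x t) ≤ B

theorem TitForTatEssentiallyUnbeatable.three_cycle_nonpos {X : Type*} {Δ : X → X → ℝ}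
    (h : TitForTatEssentiallyUnbeatable Δ) (a b c : X) : Δ b a + Δ c b + Δ a c ≤ 0 := by
  have hx := threeCycle_periodic a b c
  rw [← threeCycle_sum_range_three]
  exact hx.sum_range_lag_nonpos Δ (h _ ⟨3, three_pos, hx⟩)

/-- If tit-for-tat is essentially unbeatable, i.e., against every periodic cycle
of opponent actions the cumulative relative payoff is bounded, then every
3-cycle of actions has zero total relative payoff:
`Δ(x₀,x₂) + Δ(x₁,x₀) + Δ(x₂,x₁) = 0`. -/
theorem tit_for_tat_unbeatable_three_cycle {X : Type*} (π : X → X → ℝ)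
    (Δ : X → X → ℝ) (hΔ : ∀ x y, Δ x y = π x y - π y x)
    (hunbeat : ∀ x : ℕ → X, (∃ n, 0 < n ∧ ∀ t, x (t + n) = x t) →
      ∃ B : ℝ, ∀ T, ∑ t ∈ Finset.range T, Δ (x (t + 1)) (x t) ≤ B) :
    ∀ x₀ x₁ x₂ : X, Δ x₀ x₂ + Δ x₁ x₀ + Δ x₂ x₁ = 0 := by
  intro x₀ x₁ x₂
  have hanti : ∀ x y, Δ y x = -Δ x y := fun x y => by rw [hΔ, hΔ]; ring
  have hforward := TitForTatEssentiallyUnbeatable.three_cycle_nonpos hunbeat x₂ x₀ x₁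
  have hbackward := TitForTatEssentiallyUnbeatable.three_cycle_nonpos hunbeat x₀ x₂ x₁
  exact le_antisymm hforward (by linarith [hanti x₀ x₂, hanti x₁ x₀, hanti x₂ x₁])
end

section
/- Let Δ : X × X → ℝ be antisymmetric (Δ(x,y) = −Δ(y,x)). Then Δ is a valuation (Δ(x'',y'') − Δ(x',y'') = Δ(x'',y') − Δ(x',y') for all x'', x', y'', y') if and only if Δ is additively separable, i.e., there exists f : X → ℝ such that Δ(x,y) = f(x) − f(y) for all x, y ∈ X. -/
/-- For an antisymmetric `Δ`, being a valuation is equivalent to being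
additively separable: `Δ(x,y) = f(x) - f(y)` for some `f`. -/
theorem valuation_iff_additively_separable {X : Type*} (Δ : X → X → ℝ)
    (hanti : ∀ x y, Δ x y = -Δ y x) :
    (∀ x'' x' y'' y' : X, Δ x'' y'' - Δ x' y'' = Δ x'' y' - Δ x' y') ↔
      ∃ f : X → ℝ, ∀ x y, Δ x y = f x - f y := by
  constructor
  · intro h
    by_cases hX : Nonempty X
    · obtain ⟨y0⟩ := hX
      refine ⟨fun x => Δ x y0, fun x y => ?_⟩
      have h1 := h x y y y0
      have h2 : Δ y y = 0 := by have := hanti y y; linarith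
      linarith
    · exact ⟨fun x => 0, fun x y => absurd ⟨x⟩ hX⟩
  · rintro ⟨f, hf⟩ x'' x' y'' y'
    rw [hf, hf, hf, hf]; ring
end

section
/- A symmetric two-player game (X, π) is an exact potential game if and only if its relative payoff function Δ(x,y) = π(x,y) − π(y,x) is additively separable, i.e., Δ(x,y) = f(x) − f(y) for some f : X → ℝ. -/
/-- A symmetric two-player game is an exact potential game if and only if its
relative payoff function is additively separable. -/
theorem exact_potential_iff_separable {X : Type*} (π : X → X → ℝ)
    (Δ : X → X → ℝ) (hΔ : ∀ x y, Δ x y = π x y - π y x) :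
    (∃ P : X → X → ℝ,
      (∀ y x x', π x y - π x' y = P x y - P x' y) ∧
      (∀ y x x', π x y - π x' y = P y x - P y x')) ↔
      ∃ f : X → ℝ, ∀ x y, Δ x y = f x - f y := by
  constructor
  · rintro ⟨P, h1, h2⟩
    refine ⟨fun x => P x x - π x x, fun x y => ?_⟩
    have a := h1 y x y
    have b := h2 x y x
    rw [hΔ]
    simp only at a b ⊢
    linarith
  · rintro ⟨f, hf⟩
    refine ⟨fun x y => (π x y + π y x + f x + f y) / 2, ?_, ?_⟩ <;>
      intro y x x' <;>
      [skip; skip] <;>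
      · have e1 : π x y - π y x = f x - f y := by
          have := hf x y; rw [hΔ] at this; linarith
        have e2 : π x' y - π y x' = f x' - f y := by
          have := hf x' y; rw [hΔ] at this; linarith
        simp only
        linarith
end

section
/- In any symmetric 2×2 game, imitation is essentially unbeatable: against an imitator who copies the opponent's previous action exactly when the opponent's previous-period relative payoff Δ(x_{t},y_{t}) > 0, no sequence of opponent actions achieves cumulative relative payoff exceeding max_{x,y} Δ(x,y). -/
/-! The imitator's *potential* `V u = max_z Δ(u, z)` bounds the opponent's cumulative relative
payoff before each period: it starts nonnegative, a period with `Δ(x, y) ≤ 0` lowers the sum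
without changing `y`, and a period with `Δ(x, y) > 0` makes the imitator copy `x`. In a 2×2 game
the potential of the losing action `y` is then `0`, so the new sum is at most `Δ(x, y) ≤ V x`. -/

open Finset

section Imitation

variable {X : Type*}

theorem sum_range_le_of_imitate_if_better (Δ : X → X → ℝ) (V : X → ℝ) (x y : ℕ → X)
    (hrule : ∀ t, y (t + 1) = if 0 < Δ (x t) (y t) then x t else y t)
    (hV₀ : 0 ≤ V (y 0)) (hV : ∀ u v, 0 < Δ u v → V v + Δ u v ≤ V u) :
    ∀ T, ∑ t ∈ range T, Δ (x t) (y t) ≤ V (y T) := by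
  intro T
  induction T with
  | zero => simpa using hV₀
  | succ T ih =>
    rw [sum_range_succ, hrule T]
    split_ifs with hwin
    · linarith [hV _ _ hwin]
    · linarith [not_lt.mp hwin]

noncomputable def maxAdvantage (Δ : X → X → ℝ) (u : X) : ℝ :=
  ⨆ z, Δ u z

theorem le_maxAdvantage [Finite X] (Δ : X → X → ℝ) (u z : X) : Δ u z ≤ maxAdvantage Δ u :=
  le_ciSup (Set.finite_range _).bddAbove z

theorem maxAdvantage_le_sSup [Finite X] [Nonempty X] (Δ : X → X → ℝ) (u : X) :
    maxAdvantage Δ u ≤ sSup (Set.range fun p : X × X => Δ p.1 p.2) :=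
  ciSup_le fun z => le_csSup (Set.finite_range _).bddAbove ⟨(u, z), rfl⟩

theorem maxAdvantage_add_le_of_card_eq_two [Fintype X] (hcard : Fintype.card X = 2)
    (Δ : X → X → ℝ) (hanti : ∀ u v, Δ u v = -Δ v u) {u v : X} (hwin : 0 < Δ u v) :
    maxAdvantage Δ v + Δ u v ≤ maxAdvantage Δ u := by
  classical
  have : Nonempty X := ⟨u⟩
  have hself : ∀ w, Δ w w = 0 := fun w => by linarith [hanti w w]
  have huv : u ≠ v := by rintro rfl; exact hwin.ne' (hself u)
  have hpair : ({u, v} : Finset X) = univ :=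
    eq_univ_of_card _ (by rw [card_pair huv, hcard])
  have hloser : maxAdvantage Δ v ≤ 0 := by
    refine ciSup_le fun z => ?_
    have hz : z ∈ ({u, v} : Finset X) := hpair ▸ mem_univ z
    rcases mem_insert.mp hz with rfl | hz
    · linarith [hanti z v]
    · rw [mem_singleton.mp hz, hself]
  linarith [le_maxAdvantage Δ u v]

end Imitation

/-- In any symmetric 2×2 game, imitate-if-better is essentially unbeatable: the
cumulative relative payoff of the opponent never exceeds the maximal one-period
payoff differential. -/
theorem two_by_two_imitation_unbeatable {X : Type*} [Fintype X]
    (hcard : Fintype.card X = 2)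
    (π : X → X → ℝ) (Δ : X → X → ℝ) (hΔ : ∀ x y, Δ x y = π x y - π y x)
    (x y : ℕ → X)
    (hrule : ∀ t, y (t + 1) = if 0 < Δ (x t) (y t) then x t else y t) :
    ∀ T, ∑ t ∈ Finset.range (T + 1), Δ (x t) (y t) ≤
      sSup (Set.range fun p : X × X => Δ p.1 p.2) := by
  intro T
  have hanti : ∀ u v, Δ u v = -Δ v u := fun u v => by rw [hΔ, hΔ]; ring
  have : Nonempty X := Fintype.card_pos_iff.mp (by omega)
  have hV₀ : 0 ≤ maxAdvantage Δ (y 0) := by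
    simpa [hΔ] using le_maxAdvantage Δ (y 0) (y 0)
  calc ∑ t ∈ range (T + 1), Δ (x t) (y t) ≤ maxAdvantage Δ (y (T + 1)) :=
        sum_range_le_of_imitate_if_better Δ _ x y hrule hV₀
          (fun _ _ => maxAdvantage_add_le_of_card_eq_two hcard Δ hanti) (T + 1)
    _ ≤ sSup (Set.range fun p : X × X => Δ p.1 p.2) := maxAdvantage_le_sSup Δ _
end

section
/- In the synergistic relationship game with payoff π(x,y) = x(c + y − x), c > 0, on a compact X ⊂ ℝ≥0, the relative payoff function is Δ(x,y) = (cx − x²) − (cy − y²), hence the game is an exact potential game and imitation is essentially unbeatable. -/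
/-!
Since `Δ(x, y) = F x - F y` for the potential `F z = c z - z²`, each round's relative payoff is at
most the increase of `F` at the imitator's action: when the imitator copies, `Δ` is exactly that
increase, and when it keeps its action, the rule guarantees `Δ ≤ 0`.
The sum up to round `T` therefore telescopes to at most `Δ(y_{T+1}, y_0)`, a single value of `Δ`
on the compact set `X × X`.
-/

open Finset

section Imitation

variable {α : Type*}

def IsExactPotential (Δ : α → α → ℝ) (F : α → ℝ) : Prop :=
  ∀ u v, Δ u v = F u - F v

def IsImitation (Δ : α → α → ℝ) (x y : ℕ → α) : Prop :=
  ∀ t, (0 < Δ (x t) (y t) → y (t + 1) = x t) ∧ (y (t + 1) = x t ∨ y (t + 1) = y t)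

variable {Δ : α → α → ℝ} {F : α → ℝ}

theorem IsExactPotential.le_sub_of_imitation (hF : IsExactPotential Δ F) {a b b' : α}
    (hwin : 0 < Δ a b → b' = a) (hcopy : b' = a ∨ b' = b) : Δ a b ≤ F b' - F b := by
  rcases hcopy with rfl | rfl
  · exact (hF _ _).le
  · rw [sub_self]
    by_contra! hpos
    have hba := hwin hpos
    rw [hba, hF, sub_self] at hpos
    exact hpos.false

theorem IsExactPotential.sum_le_of_isImitation (hF : IsExactPotential Δ F) {x y : ℕ → α}
    (hxy : IsImitation Δ x y) (T : ℕ) :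
    ∑ t ∈ range T, Δ (x t) (y t) ≤ Δ (y T) (y 0) := by
  rw [hF]
  exact (sum_le_sum fun t _ => hF.le_sub_of_imitation (hxy t).1 (hxy t).2).trans_eq
    (sum_range_sub (fun t => F (y t)) T)

end Imitation

theorem bddAbove_setOf_eq_of_isCompact {α : Type*} [TopologicalSpace α] {X : Set α}
    {Δ : α → α → ℝ} (hX : IsCompact X) (hΔ : Continuous (Function.uncurry Δ)) :
    BddAbove {d : ℝ | ∃ u ∈ X, ∃ v ∈ X, d = Δ u v} := by
  refine ((hX.prod hX).image hΔ).bddAbove.mono ?_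
  rintro d ⟨u, hu, v, hv, rfl⟩
  exact ⟨(u, v), ⟨hu, hv⟩, rfl⟩

theorem synergistic_unbeatable_general (X : Set ℝ) (hX : IsCompact X)
    (c : ℝ)
    (π : ℝ → ℝ → ℝ) (hπ : ∀ x y, π x y = x * (c + y - x))
    (Δ : ℝ → ℝ → ℝ) (hΔ : ∀ x y, Δ x y = π x y - π y x)
    (x y : ℕ → ℝ) (hyX : ∀ t, y t ∈ X)
    (hrule : ∀ t, (0 < Δ (x t) (y t) → y (t + 1) = x t) ∧
      (y (t + 1) = x t ∨ y (t + 1) = y t)) :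
    (∀ u v : ℝ, Δ u v = (c * u - u ^ 2) - (c * v - v ^ 2)) ∧
      ∀ T, ∑ t ∈ Finset.range (T + 1), Δ (x t) (y t) ≤
        sSup {d : ℝ | ∃ u ∈ X, ∃ v ∈ X, d = Δ u v} := by
  have hpot : IsExactPotential Δ fun z => c * z - z ^ 2 := fun u v => by
    rw [hΔ, hπ, hπ]
    ring
  have hcont : Continuous (Function.uncurry Δ) := by
    have hΔfun : Function.uncurry Δ = fun p : ℝ × ℝ => (c * p.1 - p.1 ^ 2) - (c * p.2 - p.2 ^ 2) :=
      funext fun p => hpot p.1 p.2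
    rw [hΔfun]
    fun_prop
  refine ⟨hpot, fun T => ?_⟩
  calc ∑ t ∈ range (T + 1), Δ (x t) (y t) ≤ Δ (y (T + 1)) (y 0) :=
        hpot.sum_le_of_isImitation hrule (T + 1)
    _ ≤ sSup {d : ℝ | ∃ u ∈ X, ∃ v ∈ X, d = Δ u v} :=
        le_csSup (bddAbove_setOf_eq_of_isCompact hX hcont) ⟨_, hyX _, _, hyX _, rfl⟩

/-- Synergistic relationship game: with `π(x,y) = x(c + y - x)`, `c > 0`, on a
compact `X ⊂ ℝ≥0`, the relative payoff function is
`Δ(x,y) = (cx - x²) - (cy - y²)`, hence the game is an exact potential game and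
imitation is essentially unbeatable. -/
theorem synergistic_unbeatable (X : Set ℝ) (hX : IsCompact X)
    (hXne : X.Nonempty) (hXpos : ∀ z ∈ X, 0 ≤ z)
    (c : ℝ) (hc : 0 < c)
    (π : ℝ → ℝ → ℝ) (hπ : ∀ x y, π x y = x * (c + y - x))
    (Δ : ℝ → ℝ → ℝ) (hΔ : ∀ x y, Δ x y = π x y - π y x)
    (x y : ℕ → ℝ) (hxX : ∀ t, x t ∈ X) (hyX : ∀ t, y t ∈ X)
    (hrule : ∀ t, (0 < Δ (x t) (y t) → y (t + 1) = x t) ∧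
      (y (t + 1) = x t ∨ y (t + 1) = y t)) :
    (∀ u v : ℝ, Δ u v = (c * u - u ^ 2) - (c * v - v ^ 2)) ∧
      ∀ T, ∑ t ∈ Finset.range (T + 1), Δ (x t) (y t) ≤
        sSup {d : ℝ | ∃ u ∈ X, ∃ v ∈ X, d = Δ u v} :=
  synergistic_unbeatable_general X hX c π hπ Δ hΔ x y hyX hrule
end
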